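/- Let k ≥ 2 be an integer and let T = (V,E) be a finite tree with |V| ≥ k. Every connected uniform k-partition of T (i.e., a connected k-partition whose size tuple is lexicographically largest among all connected k-partitions of T) is a connected generalized k-community structure of T. -/

import Mathlib

/-- The set of neighbours of `v` lying in `C`. -/
def nbrsIn {V : Type*} [DecidableEq V] (G : SimpleGraph V) [DecidableRel G.Adj]
    (C : Finset V) (v : V) : Finset V :=
  C.filter (fun w => G.Adj v w)

/-- A connected `k`-partition of `G`: a partition of the vertex set into `k` nonempty
sets, each inducing a connected subgraph. -/
def IsConnKPartition {V : Type*} [Fintype V] [DecidableEq V] (G : SimpleGraph V)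
    {k : ℕ} (C : Fin k → Finset V) : Prop :=
  (∀ i, (C i).Nonempty) ∧
  (∀ i j, i ≠ j → Disjoint (C i) (C j)) ∧
  (∀ v : V, ∃ i, v ∈ C i) ∧
  (∀ i, (G.induce (↑(C i) : Set V)).Connected)

/-- The size tuple of a `k`-partition: the list of part sizes in nondecreasing order. -/
def sizeTuple {V : Type*} [DecidableEq V] {k : ℕ} (C : Fin k → Finset V) : List ℕ :=
  (Multiset.map (fun i => (C i).card) (Finset.univ : Finset (Fin k)).val).sort (· ≤ ·)

/-- A generalized `k`-community structure of `G`. -/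
def IsGenKComm {V : Type*} [Fintype V] [DecidableEq V] (G : SimpleGraph V) [DecidableRel G.Adj]
    {k : ℕ} (C : Fin k → Finset V) : Prop :=
  (∀ i, (C i).Nonempty) ∧
  (∀ i j, i ≠ j → Disjoint (C i) (C j)) ∧
  (∀ v : V, ∃ i, v ∈ C i) ∧
  (∀ i j, i ≠ j → ∀ v ∈ C i,
    (nbrsIn G (C j) v).card * ((C i).card - 1) ≤ (nbrsIn G (C i) v).card * (C j).card)

/-!
In a tree a vertex `v ∈ C i` has at most one neighbour `w` in another connected part `C j`, so
the community inequality for `v` and `C j` can only fail when `w` exists and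
`|C i| - 1 > d · |C j|`, where `d` is the number of neighbours of `v` in `C i`. The vertices of
`C i - v` are covered by the `d` branches at `v` (vertices reachable from a neighbour of `v`
inside `C i - v`), so some branch `A` has more than `|C j|` vertices. Replacing `C i`, `C j` by
`A` and `C j ∪ (C i \ A)` keeps the partition connected and replaces the minimum of the two part
sizes by a strictly larger one, which makes the sorted size tuple lexicographically larger,
contradicting uniformity.
-/

theorem List.lex_lt_of_countP_lt {A B : List ℕ} (hA : A.Pairwise (· ≤ ·))
    (hB : B.Pairwise (· ≤ ·)) (hlen : A.length = B.length) (t₀ : ℕ)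
    (hbelow : ∀ t < t₀, A.countP (· ≤ t) = B.countP (· ≤ t))
    (hat : B.countP (· ≤ t₀) < A.countP (· ≤ t₀)) : List.Lex (· < ·) A B := by
  induction A generalizing B with
  | nil => simp at hat
  | cons a A ih =>
    cases B with
    | nil => simp at hlen
    | cons b B =>
      simp only [List.countP_cons, decide_eq_true_eq] at hbelow hat
      rcases lt_trichotomy a b with hab | rfl | hba
      · exact .rel hab
      · refine .cons (ih hA.of_cons hB.of_cons (by simpa using hlen) (fun t ht => ?_) ?_)
        · have := hbelow t ht; split_ifs at this <;> omega
        · split_ifs at hat <;> omega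
      · exfalso
        -- every entry of `a :: A` exceeds `b`, while `b :: B` has an entry `≤ b`
        have hA0 : ∀ t < a, A.countP (· ≤ t) = 0 := fun t ht =>
          List.countP_eq_zero.2 fun x hx => by
            simpa using lt_of_lt_of_le ht ((List.pairwise_cons.1 hA).1 x hx)
        rcases lt_or_ge b t₀ with hbt | htb
        · have := hbelow b hbt
          rw [hA0 b hba] at this
          split_ifs at this <;> omega
        · have := hA0 t₀ (by omega)
          split_ifs at hat <;> omega

theorem Multiset.lex_sort_cons_cons (R : Multiset ℕ) {a b x y : ℕ}
    (h : min a b < min x y) :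
    List.Lex (· < ·) ((a ::ₘ b ::ₘ R).sort (· ≤ ·)) ((x ::ₘ y ::ₘ R).sort (· ≤ ·)) := by
  have hcount : ∀ (M : Multiset ℕ) (t : ℕ),
      (M.sort (· ≤ ·)).countP (· ≤ t) = M.countP (· ≤ t) := fun M t => by
    rw [← Multiset.coe_countP, Multiset.sort_eq]
  refine List.lex_lt_of_countP_lt (Multiset.pairwise_sort _ _) (Multiset.pairwise_sort _ _)
    (by simp) (min a b) (fun t ht => ?_) ?_
  all_goals
    simp only [hcount, Multiset.countP_cons]
    split_ifs <;> omega

theorem sizeTuple_lex_of_eqOn_compl_pair {V : Type*} [DecidableEq V] {k : ℕ}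
    {C C' : Fin k → Finset V} {i j : Fin k} (hij : i ≠ j)
    (hC' : ∀ l, l ≠ i → l ≠ j → C' l = C l)
    (hmin : min (C i).card (C j).card < min (C' i).card (C' j).card) :
    List.Lex (· < ·) (sizeTuple C) (sizeTuple C') := by
  set R := ((Finset.univ : Finset (Fin k)).erase i).erase j
  have huniv : (Finset.univ : Finset (Fin k)).val = i ::ₘ j ::ₘ R.val := by
    have hj : j ∈ (Finset.univ : Finset (Fin k)).val.erase i :=
      Finset.mem_erase.2 ⟨hij.symm, Finset.mem_univ j⟩
    rw [Finset.erase_val, Finset.erase_val, Multiset.cons_erase hj,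
      Multiset.cons_erase (Finset.mem_univ i)]
  have hR : R.val.map (fun l => (C' l).card) = R.val.map (fun l => (C l).card) :=
    Multiset.map_congr rfl fun l hl => by
      simp only [R, Finset.mem_val, Finset.mem_erase] at hl
      rw [hC' l hl.2.1 hl.1]
  unfold sizeTuple
  rw [huniv, Multiset.map_cons, Multiset.map_cons, Multiset.map_cons, Multiset.map_cons, hR]
  exact Multiset.lex_sort_cons_cons _ hmin

namespace SimpleGraph

variable {V : Type*} {G : SimpleGraph V}

def ReachableWithin (G : SimpleGraph V) (s : Set V) (u v : V) : Prop :=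
  ∃ p : G.Walk u v, ∀ y ∈ p.support, y ∈ s

namespace ReachableWithin

variable {s : Set V} {u v w : V}

theorem refl (hu : u ∈ s) : G.ReachableWithin s u u := ⟨.nil, by simpa using hu⟩

theorem symm : G.ReachableWithin s u v → G.ReachableWithin s v u
  | ⟨p, hp⟩ => ⟨p.reverse, by simpa using hp⟩

theorem trans : G.ReachableWithin s u v → G.ReachableWithin s v w → G.ReachableWithin s u w
  | ⟨p, hp⟩, ⟨q, hq⟩ => ⟨p.append q, fun y hy => by
      rcases (Walk.mem_support_append_iff p q).1 hy with hy | hy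
      exacts [hp y hy, hq y hy]⟩

theorem mem_right : G.ReachableWithin s u v → v ∈ s
  | ⟨p, hp⟩ => hp v p.end_mem_support

end ReachableWithin

theorem Walk.reachableWithin_of_mem_support {s : Set V} {u v y : V} (p : G.Walk u v)
    (hp : ∀ z ∈ p.support, z ∈ s) (hy : y ∈ p.support) : G.ReachableWithin s u y := by
  classical
  exact ⟨p.takeUntil y hy, fun z hz => hp z (p.support_takeUntil_subset_support hy hz)⟩

theorem Connected.reachableWithin {s : Set V} (hs : (G.induce s).Connected) {u v : V}
    (hu : u ∈ s) (hv : v ∈ s) : G.ReachableWithin s u v := by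
  obtain ⟨p⟩ := hs.preconnected ⟨u, hu⟩ ⟨v, hv⟩
  refine ⟨p.map (Embedding.induce s).toHom, fun y hy => ?_⟩
  obtain ⟨⟨z, hz⟩, -, rfl⟩ := List.mem_map.1 ((Walk.support_map _ _) ▸ hy)
  exact hz

theorem induce_connected_of_reachableWithin {s : Set V} {u : V} (hu : u ∈ s)
    (h : ∀ v ∈ s, G.ReachableWithin s u v) : (G.induce s).Connected := by
  rw [connected_iff_exists_forall_reachable]
  refine ⟨⟨u, hu⟩, fun ⟨v, hv⟩ => ?_⟩
  obtain ⟨p, hp⟩ := h v hv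
  exact ⟨p.induce s hp⟩

/-- Two neighbours of `v` in `s` would close a cycle through `s`. -/
theorem IsAcyclic.card_nbrsIn_le_one [DecidableEq V] [DecidableRel G.Adj] (hG : G.IsAcyclic)
    {s : Finset V} (hs : (G.induce (s : Set V)).Connected) {v : V} (hv : v ∉ s) :
    (nbrsIn G s v).card ≤ 1 := by
  refine Finset.card_le_one.2 fun w₁ h₁ w₂ h₂ => ?_
  simp only [nbrsIn, Finset.mem_filter] at h₁ h₂
  obtain ⟨p, hp⟩ := hs.reachableWithin h₁.1 h₂.1
  have hq : (Walk.cons h₁.2 p.bypass).IsPath := (Walk.cons_isPath_iff _ _).2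
    ⟨p.bypass_isPath, fun hv' => hv (hp v (p.support_bypass_subset_support hv'))⟩
  simpa using (hG.eq_snd_of_adj_start hq h₂.2 (Walk.end_mem_support _)).symm

open Classical in
noncomputable def branch (G : SimpleGraph V) (t : Finset V) (u : V) : Finset V :=
  t.filter (G.ReachableWithin t u)

theorem mem_branch {t : Finset V} {u x : V} : x ∈ G.branch t u ↔ G.ReachableWithin t u x := by
  classical
  simp only [branch, Finset.mem_filter, and_iff_right_iff_imp]
  exact ReachableWithin.mem_right

theorem branch_subset (t : Finset V) (u : V) : G.branch t u ⊆ t := by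
  classical
  exact Finset.filter_subset _ _

theorem induce_branch_connected {t : Finset V} {u : V} (hu : u ∈ t) :
    (G.induce (G.branch t u : Set V)).Connected := by
  refine induce_connected_of_reachableWithin (mem_branch.2 (.refl hu)) fun x hx => ?_
  obtain ⟨p, hp⟩ := mem_branch.1 hx
  exact ⟨p, fun y hy => mem_branch.2 (p.reachableWithin_of_mem_support hp hy)⟩

variable [DecidableEq V] [DecidableRel G.Adj]

/-- Take `u` to be the second vertex of a path in `s` from `v` to `x`. -/
theorem exists_mem_nbrsIn_reachableWithin_erase {s : Finset V}
    (hs : (G.induce (s : Set V)).Connected) {v x : V} (hv : v ∈ s) (hx : x ∈ s) (hxv : x ≠ v) :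
    ∃ u ∈ nbrsIn G s v, G.ReachableWithin (s.erase v) u x := by
  obtain ⟨p, hp⟩ := hs.reachableWithin hv hx
  have hps : ∀ y ∈ p.bypass.support, y ∈ s := fun y hy =>
    hp y (p.support_bypass_subset_support hy)
  cases hpath : p.bypass with
  | nil => exact absurd rfl hxv
  | cons hvu q =>
    have hq := hpath ▸ p.bypass_isPath
    rw [hpath] at hps
    rw [Walk.cons_isPath_iff] at hq
    refine ⟨_, Finset.mem_filter.2 ⟨hps _ (by simp), hvu⟩, q, fun y hy => ?_⟩
    exact Finset.mem_erase.2 ⟨fun hyv => hq.2 (hyv ▸ hy), hps y (by simp [hy])⟩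

theorem erase_subset_biUnion_branch {s : Finset V} (hs : (G.induce (s : Set V)).Connected)
    {v : V} (hv : v ∈ s) : s.erase v ⊆ (nbrsIn G s v).biUnion (G.branch (s.erase v)) := by
  intro x hx
  obtain ⟨hxv, hxs⟩ := Finset.mem_erase.1 hx
  obtain ⟨u, hu, hux⟩ := exists_mem_nbrsIn_reachableWithin_erase hs hv hxs hxv
  exact Finset.mem_biUnion.2 ⟨u, hu, mem_branch.2 hux⟩

/-- Every other vertex is joined to `v` through its own branch, which meets the removed one only
if the two coincide. -/
theorem induce_sdiff_branch_connected {s : Finset V} (hs : (G.induce (s : Set V)).Connected)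
    {v : V} (hv : v ∈ s) (u : V) :
    (G.induce ((s \ G.branch (s.erase v) u : Finset V) : Set V)).Connected := by
  have hvA : v ∉ G.branch (s.erase v) u := fun h => by simpa using branch_subset _ _ h
  refine induce_connected_of_reachableWithin (Finset.mem_sdiff.2 ⟨hv, hvA⟩) fun x hx => ?_
  obtain ⟨hxs, hxA⟩ := Finset.mem_sdiff.1 hx
  by_cases hxv : x = v
  · subst hxv
    exact .refl hx
  obtain ⟨u', hu', q, hq⟩ := exists_mem_nbrsIn_reachableWithin_erase hs hv hxs hxv
  refine ⟨.cons (Finset.mem_filter.1 hu').2 q, fun y hy => ?_⟩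
  rcases List.mem_cons.1 (Walk.support_cons _ _ ▸ hy) with rfl | hy
  · exact Finset.mem_sdiff.2 ⟨hv, hvA⟩
  refine Finset.mem_sdiff.2 ⟨Finset.mem_of_mem_erase (hq y hy), fun hyA => hxA ?_⟩
  have hyx : G.ReachableWithin (s.erase v) y x :=
    (q.reachableWithin_of_mem_support hq hy).symm.trans ⟨q, hq⟩
  exact mem_branch.2 ((mem_branch.1 hyA).trans hyx)

theorem exists_lt_card_branch {s : Finset V} (hs : (G.induce (s : Set V)).Connected) {v : V}
    (hv : v ∈ s) {m : ℕ} (h : (nbrsIn G s v).card * m < s.card - 1) :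
    ∃ u ∈ nbrsIn G s v, m < (G.branch (s.erase v) u).card := by
  refine Finset.exists_lt_of_sum_lt (lt_of_lt_of_le ?_ Finset.card_biUnion_le)
  calc ∑ _ ∈ nbrsIn G s v, m = (nbrsIn G s v).card * m := by simp
    _ < (s.erase v).card := by rwa [Finset.card_erase_of_mem hv]
    _ ≤ _ := Finset.card_le_card (erase_subset_biUnion_branch hs hv)

end SimpleGraph

theorem IsConnKPartition.of_eqOn_compl_pair {V : Type*} [Fintype V] [DecidableEq V]
    {G : SimpleGraph V} {k : ℕ} {C C' : Fin k → Finset V} (hC : IsConnKPartition G C)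
    {i j : Fin k} (hC' : ∀ l, l ≠ i → l ≠ j → C' l = C l)
    (hunion : C' i ∪ C' j = C i ∪ C j) (hdisj : Disjoint (C' i) (C' j))
    (hconn_i : (G.induce (C' i : Set V)).Connected)
    (hconn_j : (G.induce (C' j : Set V)).Connected) :
    IsConnKPartition G C' := by
  obtain ⟨-, hCdisj, hCcover, hCconn⟩ := hC
  have hpair : ∀ l, l = i ∨ l = j → C' l ⊆ C i ∪ C j := by
    rintro l (rfl | rfl)
    exacts [hunion ▸ Finset.subset_union_left, hunion ▸ Finset.subset_union_right]
  have hmixed : ∀ l m, (l = i ∨ l = j) → m ≠ i → m ≠ j → Disjoint (C' l) (C' m) :=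
    fun l m hl hmi hmj => (hC' m hmi hmj ▸ Finset.disjoint_union_left.2
      ⟨hCdisj i m hmi.symm, hCdisj j m hmj.symm⟩).mono_left (hpair l hl)
  have hconn : ∀ l, (G.induce (C' l : Set V)).Connected := fun l => by
    by_cases hli : l = i
    · exact hli ▸ hconn_i
    by_cases hlj : l = j
    · exact hlj ▸ hconn_j
    exact hC' l hli hlj ▸ hCconn l
  refine ⟨fun l => Finset.coe_nonempty.1 (Set.nonempty_coe_sort.1 (hconn l).nonempty),
    fun l m hlm => ?_, fun x => ?_, hconn⟩
  · by_cases hl : l = i ∨ l = j <;> by_cases hm : m = i ∨ m = j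
    · rcases hl with rfl | rfl <;> rcases hm with rfl | rfl
      exacts [absurd rfl hlm, hdisj, hdisj.symm, absurd rfl hlm]
    · rw [not_or] at hm
      exact hmixed l m hl hm.1 hm.2
    · rw [not_or] at hl
      exact (hmixed m l hm hl.1 hl.2).symm
    · rw [not_or] at hl hm
      rw [hC' l hl.1 hl.2, hC' m hm.1 hm.2]
      exact hCdisj l m hlm
  · obtain ⟨l, hl⟩ := hCcover x
    by_cases hlij : l = i ∨ l = j
    · have hx : x ∈ C' i ∪ C' j := hunion ▸ by rcases hlij with rfl | rfl <;> simp [hl]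
      rcases Finset.mem_union.1 hx with hx | hx
      exacts [⟨i, hx⟩, ⟨j, hx⟩]
    · rw [not_or] at hlij
      exact ⟨l, hC' l hlij.1 hlij.2 ▸ hl⟩

/-- Replace `C i`, `C j` by a branch `A` of `C i` at `v` larger than `C j`, and by
`C j ∪ (C i \ A)`, which is connected through the edge `v w`. -/
theorem IsConnKPartition.exists_lex_lt {V : Type*} [Fintype V] [DecidableEq V]
    {G : SimpleGraph V} [DecidableRel G.Adj] {k : ℕ} {C : Fin k → Finset V}
    (hC : IsConnKPartition G C) {i j : Fin k} (hij : i ≠ j) {v w : V} (hv : v ∈ C i)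
    (hw : w ∈ C j) (hvw : G.Adj v w)
    (hlt : (nbrsIn G (C i) v).card * (C j).card < (C i).card - 1) :
    ∃ C' : Fin k → Finset V,
      IsConnKPartition G C' ∧ List.Lex (· < ·) (sizeTuple C) (sizeTuple C') := by
  obtain ⟨-, hdisj, -, hconn⟩ := id hC
  obtain ⟨u, hu, hbig⟩ := G.exists_lt_card_branch (hconn i) hv hlt
  obtain ⟨hui, hvu⟩ := Finset.mem_filter.1 hu
  set A := G.branch ((C i).erase v) u
  set B := C j ∪ (C i \ A)
  have hAi : A ⊆ C i := (SimpleGraph.branch_subset _ _).trans (Finset.erase_subset _ _)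
  have hvB : v ∈ C i \ A := Finset.mem_sdiff.2 ⟨hv, fun h => by
    simpa using SimpleGraph.branch_subset _ _ h⟩
  have hAconn : (G.induce (A : Set V)).Connected :=
    SimpleGraph.induce_branch_connected (Finset.mem_erase.2 ⟨hvu.ne', hui⟩)
  have hBconn : (G.induce (B : Set V)).Connected := by
    rw [Finset.coe_union]
    exact SimpleGraph.connected_induce_union (hconn j).preconnected
      (SimpleGraph.induce_sdiff_branch_connected (hconn i) hv u).preconnected hw hvB hvw.symm
  have hjB : (C j).card < B.card := Finset.card_lt_card <| (Finset.ssubset_iff_of_subset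
    Finset.subset_union_left).2 ⟨v, Finset.mem_union_right _ hvB,
      Finset.disjoint_left.1 (hdisj i j hij) hv⟩
  set C' := Function.update (Function.update C i A) j B
  have hC' : ∀ l, l ≠ i → l ≠ j → C' l = C l := fun l hli hlj => by simp [C', hli, hlj]
  have hC'i : C' i = A := by simp [C', hij]
  have hC'j : C' j = B := by simp [C']
  refine ⟨C', hC.of_eqOn_compl_pair hC' ?_ ?_ (hC'i ▸ hAconn) (hC'j ▸ hBconn),
    sizeTuple_lex_of_eqOn_compl_pair hij hC' ?_⟩
  · rw [hC'i, hC'j, Finset.union_left_comm, Finset.union_sdiff_of_subset hAi, Finset.union_comm]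
  · rw [hC'i, hC'j]
    exact Finset.disjoint_union_right.2 ⟨(hdisj i j hij).mono_left hAi, Finset.disjoint_sdiff⟩
  · rw [hC'i, hC'j]
    omega

theorem stmt_8_general {V : Type*} [Fintype V] [DecidableEq V] (G : SimpleGraph V) [DecidableRel G.Adj]
    (htree : G.IsTree) {k : ℕ}
    (C : Fin k → Finset V) (hC : IsConnKPartition G C)
    (huniform : ∀ C' : Fin k → Finset V, IsConnKPartition G C' →
      ¬ List.Lex (· < ·) (sizeTuple C) (sizeTuple C')) :
    IsGenKComm G C := by
  obtain ⟨hne, hdisj, hcover, hconn⟩ := id hC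
  refine ⟨hne, hdisj, hcover, fun i j hij v hv => ?_⟩
  by_contra! hlt
  have hvj : v ∉ C j := Finset.disjoint_left.1 (hdisj i j hij) hv
  have hNj : (nbrsIn G (C j) v).card = 1 := by
    have hle := htree.isAcyclic.card_nbrsIn_le_one (hconn j) hvj
    have hpos : (nbrsIn G (C j) v).card ≠ 0 := fun h => by simp [h] at hlt
    omega
  obtain ⟨w, hw⟩ := Finset.card_pos.1 (hNj ▸ Nat.one_pos)
  rw [hNj, one_mul] at hlt
  obtain ⟨hwj, hvw⟩ := Finset.mem_filter.1 hw
  obtain ⟨C', hC', hlex⟩ := hC.exists_lex_lt hij hv hwj hvw hlt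
  exact huniform C' hC' hlex

/-- Every connected uniform `k`-partition of a tree (one whose size tuple is
lexicographically largest among all connected `k`-partitions) is a connected
generalized `k`-community structure. -/
theorem stmt_8 {V : Type*} [Fintype V] [DecidableEq V] (G : SimpleGraph V) [DecidableRel G.Adj]
    (htree : G.IsTree) {k : ℕ} (hk : 2 ≤ k) (hcard : k ≤ Fintype.card V)
    (C : Fin k → Finset V) (hC : IsConnKPartition G C)
    (huniform : ∀ C' : Fin k → Finset V, IsConnKPartition G C' →
      ¬ List.Lex (· < ·) (sizeTuple C) (sizeTuple C')) :
    IsGenKComm G C :=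
  stmt_8_general G htree C hC huniform
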